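/- Let Q be a flat SYNCSIMPLE process (a parallel composition of subprocesses each equal to !0, ?0, !✓, or ?✓) that is must-convergent. Then the process ! | ? | Q (adding one bare sender !0 and one bare receiver ?0 in parallel) is also must-convergent. -/
import Mathlib


/-- Symbols of SYNCSIMPLE: `!` (bang) and `?` (ques). -/
inductive SSym | bang | ques
deriving DecidableEq

/-- A SYNCSIMPLE subprocess: a string over {!,?} ending with `0` (false) or `✓` (true). -/
abbrev SSub := List SSym × Bool

/-- A SYNCSIMPLE process: a multiset of subprocesses. -/
abbrev SProc := Multiset SSub

/-- The SYS reduction: a leading `!` and a leading `?` of two subprocesses are consumed. -/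
def SysStep (P Q : SProc) : Prop :=
  ∃ (u1 u2 : List SSym) (b1 b2 : Bool) (R : SProc),
    P = (SSym.bang :: u1, b1) ::ₘ (SSym.ques :: u2, b2) ::ₘ R ∧
    Q = (u1, b1) ::ₘ (u2, b2) ::ₘ R

/-- A process is successful if it contains the subprocess `✓`. -/
def SSuccessful (P : SProc) : Prop := (([], true) : SSub) ∈ P

def SMayConv (P : SProc) : Prop :=
  ∃ Q, Relation.ReflTransGen SysStep P Q ∧ SSuccessful Q

def SMustConv (P : SProc) : Prop :=
  ∀ Q, Relation.ReflTransGen SysStep P Q → SMayConv Q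

/-- Lock operations: put `P_i` and take `T_i`. -/
inductive LOp | put | take
deriving DecidableEq

abbrev LSym (k : ℕ) := LOp × Fin k
abbrev LSub (k : ℕ) := List (LSym k) × Bool
abbrev LProc (k : ℕ) := Multiset (LSub k)
/-- The store of `k` locks: `true` = full (■), `false` = empty (□). -/
abbrev Store (k : ℕ) := Fin k → Bool

/-- LOCKSIMPLE step: `P_i` fills an empty lock `i` (blocks if full);
    `T_i` empties lock `i` and never blocks. -/
def LockStep {k : ℕ} : (LProc k × Store k) → (LProc k × Store k) → Prop :=
  fun s t => ∃ (i : Fin k) (u : List (LSym k)) (b : Bool) (R : LProc k),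
    ((s.1 = ((LOp.put, i) :: u, b) ::ₘ R ∧ s.2 i = false ∧
      t.1 = (u, b) ::ₘ R ∧ t.2 = Function.update s.2 i true) ∨
     (s.1 = ((LOp.take, i) :: u, b) ::ₘ R ∧
      t.1 = (u, b) ::ₘ R ∧ t.2 = Function.update s.2 i false))

def LSuccessful {k : ℕ} (s : LProc k × Store k) : Prop := (([], true) : LSub k) ∈ s.1

def LMayConv {k : ℕ} (s : LProc k × Store k) : Prop :=
  ∃ t, Relation.ReflTransGen LockStep s t ∧ LSuccessful t

def LMustConv {k : ℕ} (s : LProc k × Store k) : Prop :=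
  ∀ t, Relation.ReflTransGen LockStep s t → LMayConv t

/-- The compositional translation determined by the strings `tb = τ(!)` and `tq = τ(?)`,
    applied to a subprocess. -/
def transSub {k : ℕ} (tb tq : List (LSym k)) (u : SSub) : LSub k :=
  (u.1.flatMap (fun c => match c with | SSym.bang => tb | SSym.ques => tq), u.2)

/-- The compositional translation applied to a process. -/
def transProc {k : ℕ} (tb tq : List (LSym k)) (P : SProc) : LProc k :=
  P.map (transSub tb tq)

/-- Correctness of the compositional translation `(tb, tq)` with initial store `IS`:
    may- and must-convergence are preserved and reflected. -/
def Correct {k : ℕ} (IS : Store k) (tb tq : List (LSym k)) : Prop :=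
  ∀ P : SProc,
    (SMayConv P ↔ LMayConv (transProc tb tq P, IS)) ∧
    (SMustConv P ↔ LMustConv (transProc tb tq P, IS))

/-- The solo execution of the string `s` from store `IS` reaches the point where
    `(put, i) :: rest` remains and deadlocks there since lock `i` is full. -/
def SoloBlocked {k : ℕ} (IS : Store k) (s : List (LSym k)) (i : Fin k)
    (rest : List (LSym k)) : Prop :=
  ∃ C : Store k,
    Relation.ReflTransGen LockStep (({(s, false)} : LProc k), IS)
      (({((LOp.put, i) :: rest, false)} : LProc k), C) ∧
    C i = true

/-- Blocking type `P_i`: the blocking prefix is `R P_i` with `R` free of `P_i, T_i`. -/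
def BlockingTypeP {k : ℕ} (IS : Store k) (s : List (LSym k)) (i : Fin k) : Prop :=
  ∃ r rest, s = r ++ (LOp.put, i) :: rest ∧ (∀ x ∈ r, x.2 ≠ i) ∧
    SoloBlocked IS s i rest

/-- Blocking type `P_i P_i`: the blocking prefix is `R₁ P_i R₂ P_i` with
    `R₂` free of `P_i, T_i`, deadlocking exactly before the last `P_i`. -/
def BlockingTypePP {k : ℕ} (IS : Store k) (s : List (LSym k)) (i : Fin k) : Prop :=
  ∃ r1 r2 rest, s = r1 ++ (LOp.put, i) :: r2 ++ (LOp.put, i) :: rest ∧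
    (∀ x ∈ r2, x.2 ≠ i) ∧ SoloBlocked IS s i rest

/-- A flat SYNCSIMPLE process: every subprocess is `!0`, `?0`, `!✓` or `?✓`. -/
def Flat (Q : SProc) : Prop :=
  ∀ u ∈ Q, ∃ (c : SSym) (b : Bool), u = ([c], b)

namespace FlatAux

/-- Every subprocess has string length ≤ 1 (holds for flat processes and their reducts). -/
def Flat1 (P : SProc) : Prop := ∀ u ∈ P, u.1.length ≤ 1

/-- The count-based condition for must-convergence of flat-ish processes after
pairing off all `!0`/`?0` pairs. -/
def MC (P : SProc) : Prop :=
  (0 < Multiset.count (([SSym.bang], true) : SSub) P ∧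
    0 < Multiset.count (([SSym.ques], true) : SSub) P) ∨
  (0 < Multiset.count (([SSym.bang], true) : SSub) P ∧
    Multiset.count (([SSym.bang], false) : SSub) P <
      Multiset.count (([SSym.ques], false) : SSub) P) ∨
  (0 < Multiset.count (([SSym.ques], true) : SSub) P ∧
    Multiset.count (([SSym.ques], false) : SSub) P <
      Multiset.count (([SSym.bang], false) : SSub) P)

def J (P : SProc) : Prop := (([], true) : SSub) ∈ P ∨ MC P

lemma step_flat1 {P P' : SProc} (hf : Flat1 P) (h : SysStep P P') :
    ∃ (x y : Bool) (R : SProc),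
      P = ([SSym.bang], x) ::ₘ ([SSym.ques], y) ::ₘ R ∧
      P' = (([], x) : SSub) ::ₘ (([], y) : SSub) ::ₘ R := by
  obtain ⟨u1, u2, b1, b2, R, hP, hP'⟩ := h
  have h1 : (SSym.bang :: u1, b1) ∈ P := by rw [hP]; simp
  have h2 : (SSym.ques :: u2, b2) ∈ P := by
    rw [hP]; exact Multiset.mem_cons_of_mem (Multiset.mem_cons_self _ _)
  have e1 : u1 = [] := by have := hf _ h1; simpa using this
  have e2 : u2 = [] := by have := hf _ h2; simpa using this
  subst e1 e2
  exact ⟨b1, b2, R, hP, hP'⟩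

lemma flat1_step {P P' : SProc} (hf : Flat1 P) (h : SysStep P P') : Flat1 P' := by
  obtain ⟨x, y, R, rfl, rfl⟩ := step_flat1 hf h
  intro u hu
  rcases Multiset.mem_cons.mp hu with rfl | hu
  · simp
  rcases Multiset.mem_cons.mp hu with rfl | hu
  · simp
  · exact hf u (Multiset.mem_cons_of_mem (Multiset.mem_cons_of_mem hu))

lemma J_step {P P' : SProc} (hf : Flat1 P) (h : SysStep P P') (hJ : J P) : J P' := by
  obtain ⟨x, y, R, rfl, rfl⟩ := step_flat1 hf h
  cases x <;> cases y
  case false.false =>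
    rcases hJ with he | hmc
    · left
      have hR : (([], true) : SSub) ∈ R := by
        rcases Multiset.mem_cons.mp he with h' | h'
        · simp at h'
        rcases Multiset.mem_cons.mp h' with h' | h'
        · simp at h'
        · exact h'
      exact Multiset.mem_cons_of_mem (Multiset.mem_cons_of_mem hR)
    · right
      simp (config := { decide := true }) only [MC, Multiset.count_cons, if_true, if_false] at hmc ⊢
      omega
  all_goals left
  all_goals simp [Multiset.mem_cons]

lemma fire {P : SProc} {x y : Bool} (hx : (([SSym.bang], x) : SSub) ∈ P)
    (hy : (([SSym.ques], y) : SSub) ∈ P) :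
    ∃ R, SysStep P ((([], x) : SSub) ::ₘ (([], y) : SSub) ::ₘ R) := by
  have hy' : (([SSym.ques], y) : SSub) ∈ P.erase ([SSym.bang], x) :=
    (Multiset.mem_erase_of_ne (by simp)).mpr hy
  exact ⟨(P.erase ([SSym.bang], x)).erase ([SSym.ques], y), [], [], x, y, _,
    by rw [Multiset.cons_erase hy', Multiset.cons_erase hx], rfl⟩

lemma J_mayConv {P : SProc} (hJ : J P) : SMayConv P := by
  rcases hJ with he | hmc
  · exact ⟨P, Relation.ReflTransGen.refl, he⟩
  have key : ∀ x y : Bool, (x || y) = true → (([SSym.bang], x) : SSub) ∈ P →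
      (([SSym.ques], y) : SSub) ∈ P → SMayConv P := by
    intro x y hxy hx hy
    obtain ⟨R, hstep⟩ := fire hx hy
    refine ⟨_, Relation.ReflTransGen.single hstep, ?_⟩
    cases x
    · cases y
      · simp at hxy
      · exact Multiset.mem_cons_of_mem (Multiset.mem_cons_self _ _)
    · exact Multiset.mem_cons_self _ _
  rcases hmc with ⟨h1, h2⟩ | ⟨h1, h2⟩ | ⟨h1, h2⟩
  · exact key true true rfl (Multiset.count_pos.mp h1) (Multiset.count_pos.mp h2)
  · exact key true false rfl (Multiset.count_pos.mp h1) (Multiset.count_pos.mp (by omega))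
  · exact key false true rfl (Multiset.count_pos.mp (by omega)) (Multiset.count_pos.mp h1)

lemma mustConv_of_J {P : SProc} (hf : Flat1 P) (hJ : J P) : SMustConv P := by
  intro Q hred
  have hQ : Flat1 Q ∧ J Q := by
    induction hred with
    | refl => exact ⟨hf, hJ⟩
    | tail h1 h2 ih => exact ⟨flat1_step ih.1 h2, J_step ih.1 h2 ih.2⟩
  exact J_mayConv hQ.2

/-- A dead state: no success, and no way of ever producing one. -/
def Dead (P : SProc) : Prop :=
  Flat1 P ∧ Multiset.count (([], true) : SSub) P = 0 ∧
  (Multiset.count (([SSym.bang], true) : SSub) P = 0 ∨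
    Multiset.count (([SSym.ques], false) : SSub) P +
      Multiset.count (([SSym.ques], true) : SSub) P = 0) ∧
  (Multiset.count (([SSym.ques], true) : SSub) P = 0 ∨
    Multiset.count (([SSym.bang], false) : SSub) P +
      Multiset.count (([SSym.bang], true) : SSub) P = 0)

lemma dead_step {P P' : SProc} (hd : Dead P) (h : SysStep P P') : Dead P' := by
  obtain ⟨hf, harith⟩ := hd
  have hf' := flat1_step hf h
  obtain ⟨x, y, R, rfl, rfl⟩ := step_flat1 hf h
  refine ⟨hf', ?_⟩
  cases x <;> cases y <;>
    · simp (config := { decide := true }) only [Multiset.count_cons, if_true, if_false] at harith ⊢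
      omega

lemma dead_red {P Q : SProc} (hd : Dead P)
    (hred : Relation.ReflTransGen SysStep P Q) : Dead Q := by
  induction hred with
  | refl => exact hd
  | tail h1 h2 ih => exact dead_step ih h2

lemma dead_not_mayConv {P : SProc} (hd : Dead P) : ¬ SMayConv P := by
  rintro ⟨Q, hred, hsucc⟩
  exact Multiset.count_eq_zero.mp (dead_red hd hred).2.1 hsucc

lemma dead_of_min {P : SProc} (hf : Flat1 P)
    (he : Multiset.count (([], true) : SSub) P = 0) (hmc : ¬ MC P)
    (h0 : Multiset.count (([SSym.bang], false) : SSub) P = 0 ∨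
      Multiset.count (([SSym.ques], false) : SSub) P = 0) :
    Dead P := by
  refine ⟨hf, he, ?_, ?_⟩ <;> · simp only [MC] at hmc; omega

lemma adversary : ∀ (n : ℕ) (P : SProc),
    Multiset.count (([SSym.bang], false) : SSub) P ≤ n → Flat1 P →
    Multiset.count (([], true) : SSub) P = 0 → ¬ MC P →
    ∃ Q, Relation.ReflTransGen SysStep P Q ∧ Dead Q := by
  intro n
  induction n with
  | zero =>
    intro P hle hf he hmc
    exact ⟨P, Relation.ReflTransGen.refl, dead_of_min hf he hmc (Or.inl (by omega))⟩
  | succ n ih =>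
    intro P hle hf he hmc
    by_cases hb : 0 < Multiset.count (([SSym.bang], false) : SSub) P
    · by_cases hq : 0 < Multiset.count (([SSym.ques], false) : SSub) P
      · obtain ⟨R, rfl⟩ : ∃ R, P = ([SSym.bang], false) ::ₘ ([SSym.ques], false) ::ₘ R := by
          have hx := Multiset.count_pos.mp hb
          have hy' : (([SSym.ques], false) : SSub) ∈ P.erase ([SSym.bang], false) :=
            (Multiset.mem_erase_of_ne (by simp)).mpr (Multiset.count_pos.mp hq)
          exact ⟨_, by rw [Multiset.cons_erase hy', Multiset.cons_erase hx]⟩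
        have hstep : SysStep (([SSym.bang], false) ::ₘ ([SSym.ques], false) ::ₘ R)
            ((([], false) : SSub) ::ₘ (([], false) : SSub) ::ₘ R) := ⟨[], [], false, false, R, rfl, rfl⟩
        obtain ⟨Q, hred, hdead⟩ := ih ((([], false) : SSub) ::ₘ (([], false) : SSub) ::ₘ R)
          (by simp (config := { decide := true }) only [Multiset.count_cons, if_true, if_false] at hle ⊢; omega)
          (flat1_step hf hstep)
          (by simp (config := { decide := true }) only [Multiset.count_cons, if_true, if_false] at he ⊢; omega)
          (by
            intro hMC
            apply hmc
            simp (config := { decide := true }) only [MC, Multiset.count_cons, if_true, if_false] at hMC ⊢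
            omega)
        exact ⟨Q, Relation.ReflTransGen.head hstep hred, hdead⟩
      · exact ⟨P, Relation.ReflTransGen.refl, dead_of_min hf he hmc (Or.inr (by omega))⟩
    · exact ⟨P, Relation.ReflTransGen.refl, dead_of_min hf he hmc (Or.inl (by omega))⟩

lemma mustConv_MC {Q : SProc} (hflat : Flat Q) (hm : SMustConv Q) : MC Q := by
  by_contra hmc
  have hf : Flat1 Q := by
    intro u hu
    obtain ⟨c, b, rfl⟩ := hflat u hu
    simp
  have he : Multiset.count (([], true) : SSub) Q = 0 := by
    rw [Multiset.count_eq_zero]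
    intro hmem
    obtain ⟨c, b, h⟩ := hflat _ hmem
    simp at h
  obtain ⟨R, hred, hdead⟩ := adversary _ Q le_rfl hf he hmc
  exact dead_not_mayConv hdead (hm R hred)

end FlatAux

/-- if a flat process `Q` is must-convergent, then so is `! | ? | Q`. -/
theorem flat_mustConv_extend :
    ∀ Q : SProc, Flat Q → SMustConv Q →
      SMustConv (([SSym.bang], false) ::ₘ ([SSym.ques], false) ::ₘ Q) := by
  intro Q hflat hm
  have hmc := FlatAux.mustConv_MC hflat hm
  apply FlatAux.mustConv_of_J
  · intro u hu
    rcases Multiset.mem_cons.mp hu with rfl | hu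
    · simp
    rcases Multiset.mem_cons.mp hu with rfl | hu
    · simp
    · obtain ⟨c, b, rfl⟩ := hflat u hu
      simp
  · right
    simp (config := { decide := true }) only [FlatAux.MC, Multiset.count_cons, if_true, if_false] at hmc ⊢
    omega
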